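/- arXiv:2408.08922 — 3 statements merged into one kernel-verified Lean document; each statement's English description precedes it below -/
import Mathlib

section
/- The Miller–Tucker–Zemlin style constraints eliminate sub-tours: if u : V → ℝ satisfies 1 ≤ u_i ≤ n for all i, and u_i − u_j + 1 ≤ n(1 − x_{ij}) for all i ≠ j in a set W of n non-depot vertices, then there is no directed cycle contained entirely in W using only edges with x_{ij} = 1. -/
/-- MTZ constraints eliminate sub-tours: if `u : W → ℝ` satisfies
`1 ≤ u i ≤ n` for all `i`, and `u i - u j + 1 ≤ n * (1 - x i j)` for all
`i ≠ j` in a set `W` of `n` vertices, then there is no directed cycle in `W`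
using only edges with `x i j = 1`. -/
theorem stmt_5 {W : Type} [Fintype W] (n : ℕ) (hn : n = Fintype.card W)
    (x : W → W → ℝ) (hbin : ∀ i j, x i j = 0 ∨ x i j = 1)
    (u : W → ℝ) (hu1 : ∀ i, 1 ≤ u i) (hun : ∀ i, u i ≤ n)
    (hmtz : ∀ i j, i ≠ j → u i - u j + 1 ≤ n * (1 - x i j)) :
    ¬ ∃ (k : ℕ) (v : ℕ → W), 0 < k ∧ v k = v 0 ∧
        ∀ l < k, v l ≠ v (l + 1) ∧ x (v l) (v (l + 1)) = 1 := by
  rintro ⟨k, v, hk, hvk, hedge⟩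
  have step : ∀ l < k, u (v l) + 1 ≤ u (v (l + 1)) := by
    intro l hl
    obtain ⟨hne, hx⟩ := hedge l hl
    have := hmtz _ _ hne
    rw [hx] at this
    linarith
  have mono : ∀ l ≤ k, u (v 0) + l ≤ u (v l) := by
    intro l hl
    induction l with
    | zero => simp
    | succ m ih =>
      have hm : m < k := Nat.lt_of_succ_le hl
      have := step m hm
      have := ih hm.le
      push_cast
      linarith
  have := mono k le_rfl
  rw [hvk] at this
  have : (k : ℝ) ≤ 0 := by linarith
  have : (0:ℝ) < k := by exact_mod_cast hk
  linarith
end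

section
/- Conversely, if the edges with x_{ij}=1 on a set of n vertices form a disjoint union of simple directed paths (no cycles), then there exists an assignment of potentials u_i ∈ [1, n] satisfying u_i − u_j + 1 ≤ n(1 − x_{ij}) for all i ≠ j. -/
open Classical in
/-- Conversely, if the edges with `x i j = 1` on a set of `n` vertices form a
disjoint union of simple directed paths (in/out-degree at most 1, no directed
cycles), then there exist potentials `u i ∈ [1, n]` with
`u i - u j + 1 ≤ n * (1 - x i j)` for all `i ≠ j`. -/
theorem stmt_6 {W : Type} [Fintype W] (n : ℕ) (hn : n = Fintype.card W)
    (x : W → W → ℝ) (hbin : ∀ i j, x i j = 0 ∨ x i j = 1)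
    (hout : ∀ i, (Finset.univ.filter fun j => x i j = 1).card ≤ 1)
    (hin : ∀ j, (Finset.univ.filter fun i => x i j = 1).card ≤ 1)
    (hacyc : ¬ ∃ (k : ℕ) (v : ℕ → W), 0 < k ∧ v k = v 0 ∧
        ∀ l < k, v l ≠ v (l + 1) ∧ x (v l) (v (l + 1)) = 1) :
    ∃ u : W → ℝ, (∀ i, 1 ≤ u i ∧ u i ≤ n) ∧
      ∀ i j, i ≠ j → u i - u j + 1 ≤ n * (1 - x i j) := by
  classical
  set r : W → W → Prop := fun i j => i ≠ j ∧ x i j = 1 with hr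
  -- extract explicit paths from the transitive closure
  have hpath : ∀ a b, Relation.TransGen r a b → ∃ (k : ℕ) (v : ℕ → W), 0 < k ∧
      v 0 = a ∧ v k = b ∧ ∀ l < k, v l ≠ v (l + 1) ∧ x (v l) (v (l + 1)) = 1 := by
    intro a b h
    induction h with
    | @single c hab =>
      refine ⟨1, fun m => if m = 0 then a else c, one_pos, by simp, by simp, ?_⟩
      intro l hl
      interval_cases l
      simpa using hab
    | @tail b c h hbc ih =>
      obtain ⟨k, v, hk, h0, hkb, hst⟩ := ih
      refine ⟨k + 1, fun m => if m ≤ k then v m else c, Nat.succ_pos _, ?_, ?_, ?_⟩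
      · simp [Nat.zero_le, h0]
      · simp
      · intro l hl
        rcases lt_or_eq_of_le (Nat.lt_succ_iff.mp hl) with hlk | hlk
        · have h1 : l ≤ k := le_of_lt hlk
          have h2 : l + 1 ≤ k := hlk
          simpa [h1, h2] using hst l hlk
        · subst hlk
          have h1 : l ≤ l := le_rfl
          have h2 : ¬ (l + 1 ≤ l) := by omega
          simpa [h1, h2, hkb] using hbc
  have hirr : ∀ a, ¬ Relation.TransGen r a a := by
    intro a ha
    obtain ⟨k, v, hk, h0, hkb, hst⟩ := hpath a a ha
    exact hacyc ⟨k, v, hk, by rw [hkb, h0], hst⟩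
  let P : W → Finset W := fun i => Finset.univ.filter fun j => Relation.TransGen r j i
  have hnotmem : ∀ i, i ∉ P i := by
    intro i hi
    simp only [P, Finset.mem_filter] at hi
    exact hirr i hi.2
  have hmono : ∀ i j, r i j → (P i).card < (P j).card := by
    intro i j hij
    have hsub : P i ⊆ P j := by
      intro a ha
      simp only [P, Finset.mem_filter] at ha ⊢
      exact ⟨Finset.mem_univ a, ha.2.tail hij⟩
    have hiPj : i ∈ P j := by
      simp only [P, Finset.mem_filter]
      exact ⟨Finset.mem_univ i, Relation.TransGen.single hij⟩
    exact Finset.card_lt_card ((Finset.ssubset_iff_of_subset hsub).mpr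
      ⟨i, hiPj, hnotmem i⟩)
  have hcard : ∀ i : W, (P i).card + 1 ≤ n := by
    intro i
    have hsub : P i ⊆ Finset.univ.erase i := by
      intro a ha
      refine Finset.mem_erase.mpr ⟨?_, Finset.mem_univ a⟩
      intro h; subst h; exact hnotmem _ ha
    have := Finset.card_le_card hsub
    rw [Finset.card_erase_of_mem (Finset.mem_univ i), Finset.card_univ] at this
    have hpos : 1 ≤ Fintype.card W := Fintype.card_pos_iff.mpr ⟨i⟩
    omega
  refine ⟨fun i => ((P i).card : ℝ) + 1, ?_, ?_⟩
  · intro i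
    refine ⟨?_, ?_⟩
    · show (1 : ℝ) ≤ ((P i).card : ℝ) + 1
      linarith [Nat.cast_nonneg (α := ℝ) (P i).card]
    have h1 : ((P i).card : ℝ) + 1 ≤ n := by exact_mod_cast hcard i
    exact h1
  · intro i j hij
    have h1 : ((P i).card : ℝ) + 1 ≤ n := by exact_mod_cast hcard i
    have h2 : (0 : ℝ) ≤ ((P j).card : ℝ) := by positivity
    rcases hbin i j with h0 | hx1
    · rw [h0]
      simp only []
      linarith
    · rw [hx1]
      have h3 : ((P i).card : ℝ) + 1 ≤ ((P j).card : ℝ) := by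
        exact_mod_cast hmono i j ⟨hij, hx1⟩
      simp only []
      linarith
end

section
/- If the minimum-cost assignment of the m travelers to m distinct clusters (each traveler t assigned cluster a(t), with cost C_{t,a(t)} = min over nodes v in cluster a(t) of the round trip cost from depot t to v and back) has total cost exceeding the budget B, then the mDmSOP instance with cumulative budget B has no feasible solution in which every traveler visits at least one non-depot cluster. -/
/-! By the triangle inequality, a closed walk from a depot through a node `v` costs at least the
direct round trip from the depot to `v` and back. So any feasible solution assigns each traveler a
distinct cluster whose round-trip cost `C` is at most its tour cost, and summing over travelers
gives an injective assignment of total cost at most `B`, contradicting the assumption. -/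

open Finset

section WalkCost

variable {V : Type} {c : V → V → ℝ} (htri : ∀ i j k, c i k ≤ c i j + c j k) (w : ℕ → V)
include htri

-- Strictness of `a < b` matters: `c x x` need not vanish.
theorem cost_le_sum_Ico_cost {a b : ℕ} (hab : a < b) :
    c (w a) (w b) ≤ ∑ l ∈ Ico a b, c (w l) (w (l + 1)) := by
  induction b, hab using Nat.le_induction with
  | base => simp
  | succ b hab ih =>
    rw [sum_Ico_succ_top (a.le_succ.trans hab)]
    linarith [htri (w a) (w b) (w (b + 1))]

theorem roundTrip_le_sum_range_cost {x : V} {k l : ℕ} (hl : 0 < l) (hlk : l < k)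
    (hstart : w 0 = x) (hend : w k = x) :
    c x (w l) + c (w l) x ≤ ∑ i ∈ range k, c (w i) (w (i + 1)) := by
  rw [← sum_range_add_sum_Ico _ hlk.le, range_eq_Ico]
  nth_rw 1 [← hstart]
  rw [← hend]
  exact add_le_add (cost_le_sum_Ico_cost htri w hl) (cost_le_sum_Ico_cost htri w hlk)

end WalkCost

theorem stmt_11_general {V Q : Type} {m : ℕ}
    (d : Fin m → V) (s : Q → Finset V)
    (c : V → V → ℝ)
    (htri : ∀ i j k, c i k ≤ c i j + c j k) (B : ℝ)
    (C : Fin m → Q → ℝ)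
    (hC : ∀ t q, IsLeast {r : ℝ | ∃ v ∈ s q, r = c (d t) v + c v (d t)} (C t q))
    (hung : ∀ a : Fin m → Q, Function.Injective a → B < ∑ t, C t (a t)) :
    ¬ ∃ (k : Fin m → ℕ) (w : Fin m → ℕ → V) (visit : Fin m → Q),
        Function.Injective visit ∧
        (∀ t, 0 < k t ∧ w t 0 = d t ∧ w t (k t) = d t ∧
          ∃ l, 0 < l ∧ l < k t ∧ w t l ∈ s (visit t)) ∧
        ∑ t, ∑ l ∈ Finset.range (k t), c (w t l) (w t (l + 1)) ≤ B := by
  rintro ⟨k, w, visit, hvisit, hfeas, hbudget⟩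
  have hassign : ∀ t, C t (visit t) ≤ ∑ l ∈ range (k t), c (w t l) (w t (l + 1)) := by
    intro t
    obtain ⟨-, hstart, hend, l, hl, hlk, hmem⟩ := hfeas t
    calc C t (visit t) ≤ c (d t) (w t l) + c (w t l) (d t) := (hC t (visit t)).2 ⟨w t l, hmem, rfl⟩
      _ ≤ _ := roundTrip_le_sum_range_cost htri (w t) hl hlk hstart hend
  exact (hung visit hvisit).not_ge ((sum_le_sum fun t _ => hassign t).trans hbudget)

/-- If the minimum-cost assignment of the `m` travelers to `m` distinct
clusters (traveler `t` to cluster `a t` at cost `C t (a t)`, the minimum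
round-trip cost from depot `t` into cluster `a t`) has total cost exceeding
the budget `B`, then the mDmSOP instance with cumulative budget `B` has no
feasible solution in which every traveler visits at least one cluster. -/
theorem stmt_11 {V Q : Type} [Fintype V] [Fintype Q] {m : ℕ}
    (d : Fin m → V) (s : Q → Finset V)
    (c : V → V → ℝ) (hc : ∀ i j, 0 ≤ c i j)
    (htri : ∀ i j k, c i k ≤ c i j + c j k) (B : ℝ)
    (C : Fin m → Q → ℝ)
    (hC : ∀ t q, IsLeast {r : ℝ | ∃ v ∈ s q, r = c (d t) v + c v (d t)} (C t q))
    (hung : ∀ a : Fin m → Q, Function.Injective a → B < ∑ t, C t (a t)) :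
    ¬ ∃ (k : Fin m → ℕ) (w : Fin m → ℕ → V) (visit : Fin m → Q),
        Function.Injective visit ∧
        (∀ t, 0 < k t ∧ w t 0 = d t ∧ w t (k t) = d t ∧
          ∃ l, 0 < l ∧ l < k t ∧ w t l ∈ s (visit t)) ∧
        ∑ t, ∑ l ∈ Finset.range (k t), c (w t l) (w t (l + 1)) ≤ B :=
  stmt_11_general d s c htri B C hC hung
end
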